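/- arXiv:1206.0362 — 5 statements merged into one kernel-verified Lean document; each statement's English description precedes it below -/
import Mathlib

section
/- Let (Ω, ℱ, P) be a probability space carrying an i.i.d. sequence (D_i)_{i≥1} of nonnegative integrable real random variables with common mean m > 0, and for each α ∈ (0,1) a random variable G_α with values in ℕ satisfying P(G_α ≥ n) = (1-α)^n for all n ∈ ℕ, independent of the whole sequence (D_i). Then, as α → 0⁺, the law of the random variable α·∑_{i=1}^{G_α} D_i converges weakly (i.e. in distribution) to the exponential distribution with rate 1/m (mean m). -/
/-!
Write `Sₙ = ∑_{i<n} D i`. Conditioning on the path `(D i)`, which is independent of the geometric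
variable `G α`, gives `E f(α S_{G α}) = E ∑ₙ (1-α)ⁿ α f(α Sₙ)`. Fix a path with `Sₙ / n → m`
(strong law of large numbers) and spread the weight of `n` uniformly over `[n m α, (n+1) m α)`:
the sum becomes `∫₀^∞ (1-α)^N f(α S_N) / m dx` with `N = ⌊x / (m α)⌋`. As `α → 0⁺`,
`(1-α)^N → e^{-x/m}` and `α S_N → x`, under the integrable bound `e^{1-x/m} ‖f‖ / m`, so dominated
convergence in `x` and then in `ω` gives the exponential limit.
-/

open Filter MeasureTheory ProbabilityTheory
open Set Real
open scoped Topology BoundedContinuousFunction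

section FloorIntegral

variable {E : Type*} [NormedAddCommGroup E] [NormedSpace ℝ E] [CompleteSpace E]

theorem tsum_eq_integral_Ioi_nat_floor {g : ℕ → E} (hg : Summable fun n => ‖g n‖) :
    ∑' n, g n = ∫ x in Ioi (0 : ℝ), g ⌊x⌋₊ := by
  let s : ℕ → Set ℝ := fun n => Ico n (n + 1)
  have hs : ∀ n, MeasurableSet (s n) := fun n => measurableSet_Ico
  have hfloor : ∀ n, EqOn (fun x : ℝ => g ⌊x⌋₊) (fun _ => g n) (s n) :=
    fun n x hx => congrArg g (Nat.floor_eq_on_Ico n x hx)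
  have hvol : ∀ n, volume (s n) = 1 := fun n => by simp [s, Real.volume_Ico]
  have hpiece : ∀ n, ∫ x in s n, g ⌊x⌋₊ = g n := fun n => by
    rw [setIntegral_congr_fun (hs n) (hfloor n), setIntegral_const, measureReal_def, hvol,
      ENNReal.toReal_one, one_smul]
  have hdisj : Pairwise (Function.onFun Disjoint s) := by
    intro i j hij
    refine Set.disjoint_left.2 fun x hi hj => hij ?_
    rw [← Nat.floor_eq_on_Ico i x hi, ← Nat.floor_eq_on_Ico j x hj]
  have hunion : ⋃ n, s n = Ici 0 := by
    ext x
    simp only [mem_iUnion, mem_Ici]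
    refine ⟨fun ⟨n, hn, _⟩ => (Nat.cast_nonneg n).trans hn, fun hx => ⟨⌊x⌋₊, ?_⟩⟩
    exact ⟨Nat.floor_le hx, Nat.lt_floor_add_one x⟩
  have hint : IntegrableOn (fun x : ℝ => g ⌊x⌋₊) (⋃ n, s n) := by
    refine integrableOn_iUnion_of_summable_integral_norm (fun n => ?_) (hg.congr fun n => ?_)
    · exact (integrableOn_congr_fun (hfloor n) (hs n)).2 (integrableOn_const (by simp [hvol]))
    · rw [setIntegral_congr_fun (hs n) (fun x hx => congrArg norm (hfloor n hx)),
        setIntegral_const, measureReal_def, hvol, ENNReal.toReal_one, one_smul]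
  rw [← integral_Ici_eq_integral_Ioi, ← hunion, integral_iUnion hs hdisj hint]
  exact tsum_congr fun n => (hpiece n).symm

theorem tsum_eq_integral_Ioi_nat_floor_div {g : ℕ → E} (hg : Summable fun n => ‖g n‖)
    {c : ℝ} (hc : 0 < c) :
    ∑' n, g n = ∫ x in Ioi (0 : ℝ), c⁻¹ • g ⌊x / c⌋₊ := by
  rw [integral_smul, tsum_eq_integral_Ioi_nat_floor hg]
  have := integral_comp_mul_right_Ioi (fun x => g ⌊x⌋₊) 0 (inv_pos.2 hc)
  simp only [zero_mul, inv_inv] at this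
  simp only [div_eq_mul_inv, this, smul_smul, inv_mul_cancel₀ hc.ne', one_smul]

end FloorIntegral

theorem tendsto_mul_nat_floor_div_nhdsGT {a : ℝ} (ha : 0 ≤ a) :
    Tendsto (fun α : ℝ => α * ⌊a / α⌋₊) (𝓝[>] 0) (𝓝 a) := by
  refine (tendsto_nat_floor_mul_div_atTop ha |>.comp tendsto_inv_nhdsGT_zero).congr fun α => ?_
  simp [div_eq_mul_inv, mul_comm]

theorem tendsto_nat_floor_div_nhdsGT_atTop {a : ℝ} (ha : 0 < a) :
    Tendsto (fun α : ℝ => ⌊a / α⌋₊) (𝓝[>] 0) atTop :=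
  tendsto_nat_floor_atTop.comp <| (tendsto_inv_nhdsGT_zero.const_mul_atTop ha).congr fun α =>
    (div_eq_mul_inv a α).symm

theorem tendsto_log_one_sub_div_nhdsNE :
    Tendsto (fun α : ℝ => log (1 - α) / α) (𝓝[≠] 0) (𝓝 (-1)) := by
  have h : HasDerivAt (fun α : ℝ => log (1 - α)) (-1) 0 := by
    simpa using ((hasDerivAt_id (0 : ℝ)).const_sub 1).log (by norm_num)
  refine (hasDerivAt_iff_tendsto_slope.1 h).congr fun α => ?_
  simp [slope, div_eq_inv_mul]

theorem tendsto_one_sub_pow_of_tendsto_mul {N : ℝ → ℕ} {t : ℝ}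
    (hN : Tendsto (fun α => α * N α) (𝓝[>] 0) (𝓝 t)) :
    Tendsto (fun α => (1 - α) ^ N α) (𝓝[>] 0) (𝓝 (exp (-t))) := by
  have hlog : Tendsto (fun α : ℝ => log (1 - α) / α) (𝓝[>] 0) (𝓝 (-1)) :=
    tendsto_log_one_sub_div_nhdsNE.mono_left (nhdsWithin_mono _ fun _ h => ne_of_gt h)
  have hexp := (continuous_exp.tendsto _).comp (hN.mul hlog)
  rw [mul_neg_one] at hexp
  refine hexp.congr' ?_
  filter_upwards [Ioo_mem_nhdsGT one_pos] with α ⟨hα0, hα1⟩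
  rw [Function.comp_apply, mul_comm α, mul_assoc, mul_div_cancel₀ _ hα0.ne', exp_nat_mul,
    exp_log (sub_pos.2 hα1)]

theorem one_sub_pow_nat_floor_div_le {α : ℝ} (hα0 : 0 < α) (hα1 : α ≤ 1) (y : ℝ) :
    (1 - α) ^ ⌊y / α⌋₊ ≤ exp (1 - y) := by
  have hfloor : y - α ≤ α * ⌊y / α⌋₊ := by
    have := Nat.lt_floor_add_one (y / α)
    rw [div_lt_iff₀ hα0] at this
    linarith
  calc (1 - α) ^ ⌊y / α⌋₊ ≤ exp (-α) ^ ⌊y / α⌋₊ :=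
        pow_le_pow_left₀ (sub_nonneg.2 hα1) (one_sub_le_exp_neg α) _
    _ = exp (-(α * ⌊y / α⌋₊)) := by rw [← exp_nat_mul]; ring_nf
    _ ≤ exp (1 - y) := exp_le_exp.2 (by linarith)

theorem Filter.Tendsto.mul_comp_of_tendsto_div {ι : Type*} {l : Filter ι} {s : ℕ → ℝ} {m t : ℝ}
    (hs : Tendsto (fun n => s n / n) atTop (𝓝 m)) {a : ι → ℝ} {N : ι → ℕ}
    (hN : Tendsto N l atTop) (haN : Tendsto (fun i => a i * N i) l (𝓝 t)) :
    Tendsto (fun i => a i * s (N i)) l (𝓝 (t * m)) := by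
  refine (haN.mul (hs.comp hN)).congr' ?_
  filter_upwards [hN.eventually_ne_atTop 0] with i hi
  have : (N i : ℝ) ≠ 0 := Nat.cast_ne_zero.2 hi
  simp only [Function.comp_apply]
  field_simp

theorem tendsto_one_sub_pow_mul_comp_nat_floor {m x : ℝ} (hm : 0 < m) (hx : 0 < x) {f : ℝ → ℝ}
    (hf : ContinuousAt f x) {s : ℕ → ℝ} (hs : Tendsto (fun n => s n / n) atTop (𝓝 m)) :
    Tendsto (fun α => (1 - α) ^ ⌊x / m / α⌋₊ * f (α * s ⌊x / m / α⌋₊)) (𝓝[>] 0)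
      (𝓝 (exp (-(x / m)) * f x)) := by
  have hαN := tendsto_mul_nat_floor_div_nhdsGT (div_pos hx hm).le
  have hsN := hs.mul_comp_of_tendsto_div (tendsto_nat_floor_div_nhdsGT_atTop (div_pos hx hm)) hαN
  rw [div_mul_cancel₀ x hm.ne'] at hsN
  exact (tendsto_one_sub_pow_of_tendsto_mul hαN).mul (hf.tendsto.comp hsN)

theorem integral_expMeasure_eq_integral_Ioi {r : ℝ} (hr : 0 < r) (f : ℝ → ℝ) :
    ∫ x, f x ∂expMeasure r = ∫ x in Ioi 0, r * exp (-(r * x)) * f x := by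
  have hpdf : expMeasure r = volume.withDensity (exponentialPDF r) := rfl
  have hmeas : Measurable (exponentialPDF r) := (measurable_exponentialPDFReal r).ennreal_ofReal
  rw [hpdf, integral_withDensity_eq_integral_toReal_smul hmeas
      (ae_of_all _ fun _ => ENNReal.ofReal_lt_top), ← integral_Ici_eq_integral_Ioi,
    ← setIntegral_eq_integral_of_forall_compl_eq_zero (s := Ici 0) fun x hx => by
      rw [exponentialPDF_of_neg (not_le.1 hx), ENNReal.toReal_zero, zero_smul]]
  refine setIntegral_congr_fun measurableSet_Ici fun x hx => ?_
  rw [exponentialPDF_of_nonneg hx, ENNReal.toReal_ofReal (by positivity), smul_eq_mul]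

section GeometricWeights

variable {α : ℝ}

theorem summable_norm_geometric_mul (hα : α ∈ Ioc 0 1) {b : ℕ → ℝ} {C : ℝ}
    (hb : ∀ n, ‖b n‖ ≤ C) : Summable fun n => ‖(1 - α) ^ n * α * b n‖ := by
  have hw : ∀ n : ℕ, 0 ≤ (1 - α) ^ n * α := fun n =>
    mul_nonneg (pow_nonneg (sub_nonneg.2 hα.2) n) hα.1.le
  refine ((summable_geometric_of_lt_one (sub_nonneg.2 hα.2) (sub_lt_self 1 hα.1)).mul_right
    (α * C)).of_nonneg_of_le (fun n => norm_nonneg _) fun n => ?_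
  rw [norm_mul, Real.norm_of_nonneg (hw n), ← mul_assoc]
  exact mul_le_mul_of_nonneg_left (hb n) (hw n)

theorem tsum_geometric_mul_eq_integral (hα : α ∈ Ioc 0 1) (b : ℕ → ℝ) :
    ∑' n, (1 - α) ^ n * α * b n = ∫ n, b n ∂geometricMeasure ⟨α, Ioc_subset_Icc_self hα⟩ := by
  rw [integral_geometricMeasure fun h => hα.1.ne' (congrArg Subtype.val h)]
  rfl

theorem norm_tsum_geometric_mul_le (hα : α ∈ Ioc 0 1) {b : ℕ → ℝ} {C : ℝ}
    (hb : ∀ n, ‖b n‖ ≤ C) : ‖∑' n, (1 - α) ^ n * α * b n‖ ≤ C := by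
  simpa [tsum_geometric_mul_eq_integral hα] using
    norm_integral_le_of_norm_le_const (μ := geometricMeasure _) (ae_of_all _ hb)

theorem stronglyMeasurable_tsum_geometric_mul (hα : α ∈ Ioc 0 1) {β : Type*}
    [MeasurableSpace β] {H : β × ℕ → ℝ} (hH : Measurable H) :
    StronglyMeasurable fun x => ∑' n, (1 - α) ^ n * α * H (x, n) := by
  simp only [tsum_geometric_mul_eq_integral hα]
  exact hH.stronglyMeasurable.integral_prod_right'

end GeometricWeights

theorem tendsto_tsum_geometric_mul_comp {m : ℝ} (hm : 0 < m) (f : ℝ →ᵇ ℝ) {s : ℕ → ℝ}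
    (hs : Tendsto (fun n => s n / n) atTop (𝓝 m)) :
    Tendsto (fun α => ∑' n, (1 - α) ^ n * α * f (α * s n)) (𝓝[>] 0)
      (𝓝 (∫ x, f x ∂expMeasure m⁻¹)) := by
  let F : ℝ → ℝ → ℝ := fun α x => m⁻¹ * ((1 - α) ^ ⌊x / m / α⌋₊ * f (α * s ⌊x / m / α⌋₊))
  have hsmall : ∀ᶠ α in 𝓝[>] (0 : ℝ), α ∈ Ioo 0 1 := Ioo_mem_nhdsGT one_pos
  have hsum : ∀ α ∈ Ioo (0 : ℝ) 1, ∑' n, (1 - α) ^ n * α * f (α * s n) = ∫ x in Ioi 0, F α x := by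
    intro α hα
    rw [tsum_eq_integral_Ioi_nat_floor_div (summable_norm_geometric_mul (Ioo_subset_Ioc_self hα)
      fun n => f.norm_coe_le_norm (α * s n)) (mul_pos hm hα.1)]
    refine setIntegral_congr_fun measurableSet_Ioi fun x _ => ?_
    simp only [F, smul_eq_mul, div_mul_eq_div_div]
    field_simp [hα.1.ne']
  have hbound : ∀ α ∈ Ioo (0 : ℝ) 1, ∀ x, ‖F α x‖ ≤ m⁻¹ * exp 1 * ‖f‖ * exp (-m⁻¹ * x) := by
    intro α hα x
    have hpow := one_sub_pow_nat_floor_div_le hα.1 hα.2.le (x / m)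
    have hw : 0 ≤ (1 - α) ^ ⌊x / m / α⌋₊ := pow_nonneg (sub_nonneg.2 hα.2.le) _
    calc ‖F α x‖ = m⁻¹ * ((1 - α) ^ ⌊x / m / α⌋₊ * ‖f (α * s ⌊x / m / α⌋₊)‖) := by
          rw [norm_mul, norm_mul, Real.norm_of_nonneg (inv_nonneg.2 hm.le), Real.norm_of_nonneg hw]
      _ ≤ m⁻¹ * (exp (1 - x / m) * ‖f‖) := by gcongr; exact f.norm_coe_le_norm _
      _ = m⁻¹ * exp 1 * ‖f‖ * exp (-m⁻¹ * x) := by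
          rw [sub_eq_add_neg, exp_add]; ring_nf
  have hlim : ∀ x > 0, Tendsto (fun α => F α x) (𝓝[>] 0)
      (𝓝 (m⁻¹ * exp (-(m⁻¹ * x)) * f x)) := fun x hx => by
    have h :=
      (tendsto_one_sub_pow_mul_comp_nat_floor hm hx f.continuous.continuousAt hs).const_mul m⁻¹
    simpa only [show exp (-(x / m)) = exp (-(m⁻¹ * x)) by rw [div_eq_inv_mul], mul_assoc] using h
  rw [integral_expMeasure_eq_integral_Ioi (inv_pos.2 hm)]
  refine (tendsto_integral_filter_of_dominated_convergence
    (fun x => m⁻¹ * exp 1 * ‖f‖ * exp (-m⁻¹ * x)) ?_ ?_ ?_ ?_).congr'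
    (hsmall.mono fun α hα => (hsum α hα).symm)
  · exact Eventually.of_forall fun α => (measurable_const.mul <| (measurable_from_nat
      (f := fun n => (1 - α) ^ n * f (α * s n))).comp
        ((measurable_id.div_const m).div_const α).nat_floor).aestronglyMeasurable
  · exact hsmall.mono fun α hα => ae_of_all _ (hbound α hα)
  · exact (exp_neg_integrableOn_Ioi 0 (inv_pos.2 hm)).const_mul _
  · exact (ae_restrict_mem measurableSet_Ioi).mono hlim

section Probability

variable {Ω : Type*} [MeasurableSpace Ω] {μ : Measure Ω}

theorem map_eq_geometricMeasure [IsFiniteMeasure μ] {p : unitInterval} (hp : p ≠ 0) {G : Ω → ℕ}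
    (hG : Measurable G) (htail : ∀ n, μ {ω | n ≤ G ω} = ENNReal.ofReal ((1 - p) ^ n)) :
    μ.map G = geometricMeasure p := by
  refine Measure.ext_of_singleton fun n => ?_
  have hpre : G ⁻¹' {n} = {ω | n ≤ G ω} \ {ω | n + 1 ≤ G ω} := by
    ext ω
    simp only [mem_preimage, mem_singleton_iff, Set.mem_sdiff, mem_ofPred_eq]
    omega
  have hsub : {ω | n + 1 ≤ G ω} ⊆ {ω | n ≤ G ω} := fun ω (h : n + 1 ≤ G ω) => (n.le_succ).trans h
  rw [Measure.map_apply hG (measurableSet_singleton n), geometricMeasure_singleton hp, hpre,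
    measure_sdiff hsub (hG measurableSet_Ici).nullMeasurableSet (measure_ne_top μ _), htail, htail,
    ← ENNReal.ofReal_sub _ (pow_nonneg (sub_nonneg.2 p.2.2) _)]
  ring_nf

theorem ProbabilityTheory.IndepFun.integral_comp_eq_integral_integral_map [IsFiniteMeasure μ]
    {α β E : Type*} [MeasurableSpace α] [MeasurableSpace β] [NormedAddCommGroup E]
    [NormedSpace ℝ E] {X : Ω → α} {Y : Ω → β} (hXY : IndepFun X Y μ) (hX : AEMeasurable X μ)
    (hY : AEMeasurable Y μ) {H : α × β → E} (hH : Integrable H ((μ.map X).prod (μ.map Y))) :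
    ∫ ω, H (X ω, Y ω) ∂μ = ∫ ω, ∫ y, H (X ω, y) ∂(μ.map Y) ∂μ := by
  have hlaw := (indepFun_iff_map_prod_eq_prod_map_map hX hY).1 hXY
  calc ∫ ω, H (X ω, Y ω) ∂μ = ∫ z, H z ∂(μ.map fun ω => (X ω, Y ω)) :=
        (integral_map (hX.prodMk hY) (hlaw ▸ hH.aestronglyMeasurable)).symm
    _ = ∫ x, ∫ y, H (x, y) ∂(μ.map Y) ∂(μ.map X) := by rw [hlaw, integral_prod H hH]
    _ = ∫ ω, ∫ y, H (X ω, y) ∂(μ.map Y) ∂μ :=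
        integral_map hX hH.integral_prod_left.aestronglyMeasurable

theorem integral_comp_indepFun_geometric [IsFiniteMeasure μ] {β : Type*} [MeasurableSpace β]
    {X : Ω → β} {G : Ω → ℕ} {α : ℝ} (hα : α ∈ Ioc 0 1) (hX : Measurable X) (hG : Measurable G)
    (htail : ∀ n, μ {ω | n ≤ G ω} = ENNReal.ofReal ((1 - α) ^ n)) (hGX : IndepFun G X μ)
    {H : β × ℕ → ℝ} (hH : Measurable H) {C : ℝ} (hC : ∀ z, ‖H z‖ ≤ C) :
    ∫ ω, H (X ω, G ω) ∂μ = ∫ ω, ∑' n, (1 - α) ^ n * α * H (X ω, n) ∂μ := by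
  rw [hGX.symm.integral_comp_eq_integral_integral_map hX.aemeasurable hG.aemeasurable
    (Integrable.of_bound hH.aestronglyMeasurable C (ae_of_all _ hC)),
    map_eq_geometricMeasure (p := ⟨α, Ioc_subset_Icc_self hα⟩)
      (fun h => hα.1.ne' (congrArg Subtype.val h)) hG htail]
  simp only [tsum_geometric_mul_eq_integral hα]

end Probability

theorem geometric_sum_tendsto_exponential_general
    {Ω : Type*} [MeasurableSpace Ω] (μ : Measure Ω) [IsProbabilityMeasure μ]
    (D : ℕ → Ω → ℝ) (hDmeas : ∀ i, Measurable (D i))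
    (hDindep : iIndepFun D μ)
    (hDident : ∀ i, IdentDistrib (D i) (D 0) μ μ)
    (hDint : Integrable (D 0) μ)
    (m : ℝ) (hm : 0 < m) (hmean : ∫ ω, D 0 ω ∂μ = m)
    (G : ℝ → Ω → ℕ)
    (hGmeas : ∀ α ∈ Set.Ioo (0 : ℝ) 1, Measurable (G α))
    (hGgeom : ∀ α ∈ Set.Ioo (0 : ℝ) 1, ∀ n : ℕ,
      μ {ω | n ≤ G α ω} = ENNReal.ofReal ((1 - α) ^ n))
    (hGindep : ∀ α ∈ Set.Ioo (0 : ℝ) 1,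
      IndepFun (G α) (fun ω => (fun i => D i ω : ℕ → ℝ)) μ) :
    ∀ f : BoundedContinuousFunction ℝ ℝ,
      Tendsto
        (fun α : ℝ =>
          ∫ ω, f (α * ∑ i ∈ Finset.range (G α ω), D i ω) ∂μ)
        (nhdsWithin 0 (Set.Ioo 0 1))
        (nhds (∫ x, f x ∂(expMeasure (1 / m)))) := by
  intro f
  have hslln : ∀ᵐ ω ∂μ, Tendsto (fun n : ℕ => (∑ i ∈ Finset.range n, D i ω) / n) atTop (𝓝 m) := by
    filter_upwards [strong_law_ae D hDint (fun i j hij => hDindep.indepFun hij) hDident] with ω hω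
    simpa only [hmean, smul_eq_mul, div_eq_inv_mul] using hω
  have hpath : Measurable fun ω i => D i ω := measurable_pi_lambda _ hDmeas
  have hH : ∀ α, Measurable fun p : (ℕ → ℝ) × ℕ => f (α * ∑ i ∈ Finset.range p.2, p.1 i) :=
    fun α => measurable_from_prod_countable_left fun n =>
      f.continuous.measurable.comp (measurable_const.mul
        (Finset.measurable_sum (Finset.range n) fun i _ => measurable_pi_apply i))
  have hsmall : ∀ᶠ α in 𝓝[Ioo 0 1] (0 : ℝ), α ∈ Ioc 0 1 :=
    mem_of_superset self_mem_nhdsWithin Ioo_subset_Ioc_self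
  have hdom := tendsto_integral_filter_of_dominated_convergence (μ := μ) (fun _ => ‖f‖)
    (hsmall.mono fun α hα => ((stronglyMeasurable_tsum_geometric_mul hα (hH α)).comp_measurable
      hpath).aestronglyMeasurable)
    (hsmall.mono fun α hα => ae_of_all _ fun ω =>
      norm_tsum_geometric_mul_le hα fun n => f.norm_coe_le_norm _)
    (integrable_const _)
    (hslln.mono fun ω hω => (tendsto_tsum_geometric_mul_comp hm f hω).mono_left
      (nhdsWithin_mono _ Ioo_subset_Ioi_self))
  rw [integral_const, probReal_univ, one_smul, ← one_div] at hdom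
  refine hdom.congr' (eventually_mem_nhdsWithin.mono fun α hα => ?_)
  exact (integral_comp_indepFun_geometric (Ioo_subset_Ioc_self hα) hpath (hGmeas α hα)
    (hGgeom α hα) (hGindep α hα) (hH α) fun _ => f.norm_coe_le_norm _).symm

/-- Law of large numbers justification of the exponential assumption: if `(D i)` is an i.i.d.
sequence of nonnegative integrable random variables with mean `m > 0` and, for each
`α ∈ (0,1)`, `G α` is a geometric random variable with `P(G α ≥ n) = (1-α)^n`, independent of
the whole sequence `(D i)`, then the law of `α · ∑_{i < G α} D i` converges weakly, as
`α → 0⁺`, to the exponential distribution with rate `1/m`. -/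
theorem geometric_sum_tendsto_exponential
    {Ω : Type*} [MeasurableSpace Ω] (μ : Measure Ω) [IsProbabilityMeasure μ]
    (D : ℕ → Ω → ℝ) (hDmeas : ∀ i, Measurable (D i))
    (hDindep : iIndepFun D μ)
    (hDident : ∀ i, IdentDistrib (D i) (D 0) μ μ)
    (hDnonneg : ∀ i ω, 0 ≤ D i ω)
    (hDint : Integrable (D 0) μ)
    (m : ℝ) (hm : 0 < m) (hmean : ∫ ω, D 0 ω ∂μ = m)
    (G : ℝ → Ω → ℕ)
    (hGmeas : ∀ α ∈ Set.Ioo (0 : ℝ) 1, Measurable (G α))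
    (hGgeom : ∀ α ∈ Set.Ioo (0 : ℝ) 1, ∀ n : ℕ,
      μ {ω | n ≤ G α ω} = ENNReal.ofReal ((1 - α) ^ n))
    (hGindep : ∀ α ∈ Set.Ioo (0 : ℝ) 1,
      IndepFun (G α) (fun ω => (fun i => D i ω : ℕ → ℝ)) μ) :
    ∀ f : BoundedContinuousFunction ℝ ℝ,
      Tendsto
        (fun α : ℝ =>
          ∫ ω, f (α * ∑ i ∈ Finset.range (G α ω), D i ω) ∂μ)
        (nhdsWithin 0 (Set.Ioo 0 1))
        (nhds (∫ x, f x ∂(expMeasure (1 / m)))) :=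
  geometric_sum_tendsto_exponential_general μ D hDmeas hDindep hDident hDint m hm hmean G hGmeas
    hGgeom hGindep
end

section
/- For all real μ > 0 and Λ > 0, 1/(2·μ·(Λ+μ)) ≤ (e^{-Λ/μ} − 1 + Λ/μ)/Λ². That is, I_{E_μ} ≤ I_{D_μ}: with the same mean lifetime, the fluctuation integral (and hence the variance of the number of mRNAs at equilibrium) for an exponential lifetime distribution is smaller than for a deterministic lifetime. -/
open Real

/- Writing `Λ = xμ`, the claim reduces to `2 - x² ≤ 2(1 + x)e^{-x}` for `x ≥ 0`.
Both sides agree at `x = 0`, and `t ↦ 2(1 + t)e^{-t} + t²` is monotone since its derivative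
`2t(1 - e^{-t})` is nonnegative everywhere. -/

lemma hasDerivAt_two_mul_one_add_mul_exp_neg_add_sq (x : ℝ) :
    HasDerivAt (fun t : ℝ => 2 * (1 + t) * exp (-t) + t ^ 2) (2 * x * (1 - exp (-x))) x := by
  have hexp : HasDerivAt (fun t : ℝ => exp (-t)) (-exp (-x)) x := by
    simpa using (hasDerivAt_neg x).exp
  have hlin : HasDerivAt (fun t : ℝ => 2 * (1 + t)) 2 x := by
    simpa using ((hasDerivAt_id x).const_add 1).const_mul 2
  exact ((hlin.mul hexp).add (hasDerivAt_pow 2 x)).congr_deriv (by norm_num; ring)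

lemma monotone_two_mul_one_add_mul_exp_neg_add_sq :
    Monotone (fun t : ℝ => 2 * (1 + t) * exp (-t) + t ^ 2) := by
  refine monotone_of_deriv_nonneg
    (fun x => (hasDerivAt_two_mul_one_add_mul_exp_neg_add_sq x).differentiableAt) fun x => ?_
  rw [(hasDerivAt_two_mul_one_add_mul_exp_neg_add_sq x).deriv]
  rcases le_total 0 x with hx | hx
  · have : exp (-x) ≤ 1 := exp_le_one_iff.mpr (neg_nonpos.mpr hx)
    nlinarith
  · have : 1 ≤ exp (-x) := one_le_exp_iff.mpr (neg_nonneg.mpr hx)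
    nlinarith

lemma two_sub_sq_le_two_mul_one_add_mul_exp_neg {x : ℝ} (hx : 0 ≤ x) :
    2 - x ^ 2 ≤ 2 * (1 + x) * exp (-x) := by
  have := monotone_two_mul_one_add_mul_exp_neg_add_sq hx
  simp only [add_zero, mul_one, neg_zero, exp_zero, ne_eq, OfNat.ofNat_ne_zero,
    not_false_eq_true, zero_pow] at this
  linarith

/-- `I_{E_μ} ≤ I_{D_μ}`: the fluctuation integral for an exponential lifetime is smaller
than for a deterministic lifetime with the same mean. -/
theorem I_exp_le_I_det (mu Lam : ℝ) (hmu : 0 < mu) (hLam : 0 < Lam) :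
    1 / (2 * mu * (Lam + mu)) ≤ (Real.exp (-(Lam / mu)) - 1 + Lam / mu) / Lam ^ 2 := by
  have hkey := two_sub_sq_le_two_mul_one_add_mul_exp_neg (div_pos hLam hmu).le
  set x := Lam / mu
  have hLam_eq : Lam = x * mu := (div_mul_cancel₀ Lam hmu.ne').symm
  rw [div_le_div_iff₀ (by positivity) (by positivity), hLam_eq]
  calc 1 * (x * mu) ^ 2 = mu ^ 2 * (2 - x ^ 2) + mu ^ 2 * (2 * x ^ 2 - 2) := by ring
    _ ≤ mu ^ 2 * (2 * (1 + x) * exp (-x)) + mu ^ 2 * (2 * x ^ 2 - 2) := by gcongr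
    _ = (exp (-x) - 1 + x) * (2 * mu * (x * mu + mu)) := by ring
end

section
/- For all real μ > 0 and Λ > 0, (e^{-Λ/μ} − 1 + Λ/μ)/Λ² ≤ 2 · (1/(2·μ·(Λ+μ))) = 1/(μ·(Λ+μ)). That is, I_{D_μ} ≤ 2·I_{E_μ}: the ratio I_{D_μ}/I_{E_μ} never exceeds 2. -/
open Real

/-- `I_{D_μ} ≤ 2 I_{E_μ}`: the ratio `I_{D_μ}/I_{E_μ}` never exceeds `2`. -/
theorem I_det_le_two_I_exp (mu Lam : ℝ) (hmu : 0 < mu) (hLam : 0 < Lam) :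
    (Real.exp (-(Lam / mu)) - 1 + Lam / mu) / Lam ^ 2 ≤ 1 / (mu * (Lam + mu)) := by
  have hx : 0 < Lam / mu := div_pos hLam hmu
  have h1 : Lam / mu + 1 ≤ Real.exp (Lam / mu) := by
    linarith [Real.add_one_le_exp (Lam / mu)]
  have hpos : 0 < Real.exp (-(Lam / mu)) := Real.exp_pos _
  have key : Real.exp (-(Lam / mu)) * (Lam / mu + 1) ≤ 1 := by
    have := mul_le_mul_of_nonneg_left h1 hpos.le
    rwa [← Real.exp_add, neg_add_cancel, Real.exp_zero] at this
  rw [div_le_div_iff₀ (by positivity) (by positivity)]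
  have hmu' : mu ≠ 0 := ne_of_gt hmu
  have hdiv : Lam / mu * mu = Lam := div_mul_cancel₀ _ hmu'
  have h2 := mul_le_mul_of_nonneg_right key (by positivity : (0:ℝ) ≤ mu^2)
  have hM : (Lam / mu + 1) * mu ^ 2 = mu * (Lam + mu) := by field_simp
  have key2 : Real.exp (-(Lam / mu)) * (mu * (Lam + mu)) ≤ mu ^ 2 := by
    calc Real.exp (-(Lam / mu)) * (mu * (Lam + mu))
        = Real.exp (-(Lam / mu)) * (Lam / mu + 1) * mu ^ 2 := by rw [mul_assoc, hM]
      _ ≤ 1 * mu ^ 2 := h2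
      _ = mu ^ 2 := one_mul _
  have h3 : (Lam / mu - 1) * (mu * (Lam + mu)) = Lam ^ 2 - mu ^ 2 := by
    field_simp; ring
  have hexp : (Real.exp (-(Lam / mu)) - 1 + Lam / mu) * (mu * (Lam + mu))
      = Real.exp (-(Lam / mu)) * (mu * (Lam + mu))
        + (Lam / mu - 1) * (mu * (Lam + mu)) := by ring
  linarith
end

section
/- For all real μ₂ > 0 and μ₃ > 0, ∫₀^∞ [ ∫₀^∞ (e^{-μ₃·max(s−t,0)} − e^{-μ₃·s})² ds ] · μ₂·e^{-μ₂·t} dt = μ₃/(μ₂·(μ₂+μ₃)). -/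
/-!
For fixed `t ≥ 0` the inner integrand is `(1 - e^{-μ₃ s})²` on `(0, t]` and
`(e^{μ₃ t} - 1)² e^{-2μ₃ s}` on `(t, ∞)`, so the inner integral is `t - (1 - e^{-μ₃ t}) / μ₃`.
Integrating this term by term against the exponential density `μ₂ e^{-μ₂ t}` gives
`1/μ₂ + (μ₂/μ₃) (1/(μ₂ + μ₃) - 1/μ₂) = 1/μ₂ - 1/(μ₂ + μ₃)`.
-/

open Real MeasureTheory Set

theorem integrableOn_exp_neg_mul_Ioi {b : ℝ} (hb : 0 < b) (c : ℝ) :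
    IntegrableOn (fun x => exp (-(b * x))) (Ioi c) := by
  simpa [neg_mul] using exp_neg_integrableOn_Ioi c hb

theorem integral_exp_neg_mul_Ioi {b : ℝ} (hb : 0 < b) (c : ℝ) :
    ∫ x in Ioi c, exp (-(b * x)) = exp (-(b * c)) / b := by
  simpa [neg_mul, neg_div, div_neg] using integral_exp_mul_Ioi (neg_lt_zero.2 hb) c

theorem intervalIntegral_exp_neg_mul {b : ℝ} (hb : b ≠ 0) (t : ℝ) :
    ∫ x in (0 : ℝ)..t, exp (-(b * x)) = (1 - exp (-(b * t))) / b := by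
  have hsubst := intervalIntegral.integral_comp_mul_left (a := 0) (b := t) exp (neg_ne_zero.2 hb)
  simp only [neg_mul, mul_zero, integral_exp, exp_zero, smul_eq_mul] at hsubst
  rw [hsubst]
  field_simp
  ring

theorem intervalIntegral_one_sub_exp_neg_mul_sq {b : ℝ} (hb : b ≠ 0) (t : ℝ) :
    ∫ s in (0 : ℝ)..t, (1 - exp (-(b * s))) ^ 2
      = t - 2 * (1 - exp (-(b * t))) / b + (1 - exp (-(b * t)) ^ 2) / (2 * b) := by
  have hsq : ∀ x, exp (-(b * x)) ^ 2 = exp (-(2 * b * x)) := fun x => by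
    rw [← exp_nat_mul]; ring_nf
  have hexpand : ∀ s, (1 - exp (-(b * s))) ^ 2 = 1 - 2 * exp (-(b * s)) + exp (-(2 * b * s)) :=
    fun s => by rw [← hsq]; ring
  simp_rw [hexpand]
  have hcont : ∀ f : ℝ → ℝ, Continuous f → IntervalIntegrable f volume 0 t :=
    fun f hf => hf.intervalIntegrable 0 t
  rw [intervalIntegral.integral_add (hcont _ (by fun_prop)) (hcont _ (by fun_prop)),
    intervalIntegral.integral_sub (hcont _ (by fun_prop)) (hcont _ (by fun_prop)),
    intervalIntegral.integral_const_mul, intervalIntegral_exp_neg_mul hb,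
    intervalIntegral_exp_neg_mul (mul_ne_zero two_ne_zero hb), hsq]
  simp only [intervalIntegral.integral_const, sub_zero, smul_eq_mul, mul_one]
  ring

theorem integral_id_mul_exp_neg_mul_Ioi {a : ℝ} (ha : 0 < a) :
    ∫ x in Ioi 0, x * exp (-(a * x)) = 1 / a ^ 2 := by
  have h := integral_rpow_mul_exp_neg_mul_Ioi two_pos ha
  norm_num [Gamma_two] at h
  rwa [one_div]

theorem integrableOn_id_mul_exp_neg_mul_Ioi {a : ℝ} (ha : 0 < a) :
    IntegrableOn (fun x => x * exp (-(a * x))) (Ioi 0) :=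
  .of_integral_ne_zero (by rw [integral_id_mul_exp_neg_mul_Ioi ha]; positivity)

theorem integral_sq_exp_neg_mul_max_sub_sub {b t : ℝ} (hb : 0 < b) (ht : 0 ≤ t) :
    ∫ s in Ioi 0, (exp (-(b * max (s - t) 0)) - exp (-(b * s))) ^ 2
      = t - (1 - exp (-(b * t))) / b := by
  set f := fun s => (exp (-(b * max (s - t) 0)) - exp (-(b * s))) ^ 2 with hf
  have hnear : EqOn f (fun s => (1 - exp (-(b * s))) ^ 2) (Ioc 0 t) := fun s hs => by
    simp [hf, max_eq_right (sub_nonpos.2 hs.2)]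
  have hfar : EqOn f (fun s => (exp (b * t) - 1) ^ 2 * exp (-(2 * b) * s)) (Ioi t) :=
    fun s hs => by
      have hshift : exp (-(b * (s - t))) = exp (b * t) * exp (-(b * s)) := by
        rw [← exp_add]; ring_nf
      have hsq : exp (-(2 * b) * s) = exp (-(b * s)) ^ 2 := by rw [← exp_nat_mul]; ring_nf
      simp only [hf, max_eq_left (sub_nonneg.2 (mem_Ioi.1 hs).le), hshift, hsq]
      ring
  have hfar_int : IntegrableOn f (Ioi t) :=
    IntegrableOn.congr_fun ((integrableOn_exp_mul_Ioi (a := -(2 * b)) (by linarith) t).const_mul _)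
      hfar.symm measurableSet_Ioi
  rw [← Ioc_union_Ioi_eq_Ioi ht, setIntegral_union (Ioc_disjoint_Ioi le_rfl) measurableSet_Ioi
    (by fun_prop : Continuous f).integrableOn_Ioc hfar_int,
    setIntegral_congr_fun measurableSet_Ioc hnear, setIntegral_congr_fun measurableSet_Ioi hfar,
    ← intervalIntegral.integral_of_le ht, intervalIntegral_one_sub_exp_neg_mul_sq hb.ne',
    integral_const_mul, integral_exp_mul_Ioi (by linarith)]
  have hsq : exp (-(2 * b) * t) = exp (-(b * t)) ^ 2 := by rw [← exp_nat_mul]; ring_nf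
  have hinv : exp (b * t) * exp (-(b * t)) = 1 := by rw [← exp_add]; simp
  have hfar_val : (exp (b * t) - 1) ^ 2 * exp (-(b * t)) ^ 2 = (1 - exp (-(b * t))) ^ 2 := by
    linear_combination (exp (b * t) * exp (-(b * t)) + 1 - 2 * exp (-(b * t))) * hinv
  rw [hsq, neg_div_neg_eq, mul_div_assoc', hfar_val]
  field_simp
  ring

theorem integral_sub_one_sub_exp_neg_mul_div_mul_exp_neg_mul_Ioi {a b : ℝ}
    (ha : 0 < a) (hb : 0 < b) :
    ∫ t in Ioi 0, (t - (1 - exp (-(b * t))) / b) * (a * exp (-(a * t))) = b / (a * (a + b)) := by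
  have hab : 0 < a + b := by linarith
  have hexpand : ∀ t, (t - (1 - exp (-(b * t))) / b) * (a * exp (-(a * t)))
      = a * (t * exp (-(a * t))) + a / b * exp (-((a + b) * t)) - a / b * exp (-(a * t)) :=
    fun t => by rw [add_mul, neg_add, exp_add]; field_simp; ring
  have h₁ := (integrableOn_id_mul_exp_neg_mul_Ioi ha).const_mul a
  have h₂ := (integrableOn_exp_neg_mul_Ioi hab 0).const_mul (a / b)
  have h₃ := (integrableOn_exp_neg_mul_Ioi ha 0).const_mul (a / b)
  simp_rw [hexpand]
  rw [integral_sub (h₁.fun_add h₂) h₃, integral_add h₁ h₂, integral_const_mul, integral_const_mul,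
    integral_const_mul, integral_id_mul_exp_neg_mul_Ioi ha, integral_exp_neg_mul_Ioi ha,
    integral_exp_neg_mul_Ioi hab]
  simp only [mul_zero, neg_zero, exp_zero]
  field_simp
  ring

/-- Second term of the protein variance in the all-exponential case:
`∫₀^∞ [∫₀^∞ (e^{-μ₃ max(s-t,0)} - e^{-μ₃ s})² ds] μ₂ e^{-μ₂ t} dt = μ₃/(μ₂(μ₂+μ₃))`. -/
theorem second_term_all_exponential (mu2 mu3 : ℝ) (hmu2 : 0 < mu2) (hmu3 : 0 < mu3) :
    ∫ t in Set.Ioi (0 : ℝ),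
        (∫ s in Set.Ioi (0 : ℝ),
          (Real.exp (-(mu3 * max (s - t) 0)) - Real.exp (-(mu3 * s))) ^ 2)
          * (mu2 * Real.exp (-(mu2 * t)))
      = mu3 / (mu2 * (mu2 + mu3)) := by
  calc _ = ∫ t in Ioi 0, (t - (1 - exp (-(mu3 * t))) / mu3) * (mu2 * exp (-(mu2 * t))) :=
        setIntegral_congr_fun measurableSet_Ioi fun t ht => by
          rw [integral_sq_exp_neg_mul_max_sub_sub hmu3 (mem_Ioi.1 ht).le]
    _ = mu3 / (mu2 * (mu2 + mu3)) :=
        integral_sub_one_sub_exp_neg_mul_div_mul_exp_neg_mul_Ioi hmu2 hmu3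
end

section
/- For all real μ₂ > 0 and μ₃ > 0, ∫₀^∞ [ ∫₀^∞ (μ₃·max(0, min(s, 1/μ₃) − max(s−t, 0)))² ds ] · μ₂·e^{-μ₂·t} dt = (2·μ₃/μ₂²)·(1 − (μ₃/μ₂)·(1 − e^{-μ₂/μ₃})). -/
/-!
For fixed `t`, the inner integrand is `μ₃²` times the squared length of `[s - t, s] ∩ [0, a]`,
`a = 1/μ₃`. This trapezoidal profile is symmetric in `t` and `a`, and its squared integral is
`a t² - t³/3` for `t ≤ a` and `a² t - a³/3` for `t ≥ a`. Against the exponential density the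
outer integrand is then a polynomial times `e^{-μ₂ t}` on `(0, a]` and on `(a, ∞)`, each with an
explicit primitive of the form `-Q(t) e^{-μ₂ t}`.
-/

open Real MeasureTheory Set Filter Topology

/-- The length of `[s - t, s] ∩ [0, a]`. -/
def overlapLength (a t s : ℝ) : ℝ := max 0 (min s a - max (s - t) 0)

lemma overlapLength_comm (a t s : ℝ) : overlapLength a t s = overlapLength t a s := by
  unfold overlapLength
  grind

lemma overlapLength_of_le_of_le {a t s : ℝ} (hs : 0 ≤ s) (hst : s ≤ t) (hsa : s ≤ a) :
    overlapLength a t s = s := by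
  grind [overlapLength]

lemma overlapLength_of_le_of_ge {a t s : ℝ} (ht : 0 ≤ t) (hts : t ≤ s) (hsa : s ≤ a) :
    overlapLength a t s = t := by
  grind [overlapLength]

lemma overlapLength_of_ge_of_ge {a t s : ℝ} (has : a ≤ s) (hts : t ≤ s) (hs : s ≤ a + t) :
    overlapLength a t s = a + t - s := by
  grind [overlapLength]

lemma overlapLength_of_add_le {a t s : ℝ} (hs : a + t ≤ s) : overlapLength a t s = 0 := by
  grind [overlapLength]

@[fun_prop]
lemma continuous_overlapLength (a t : ℝ) : Continuous (overlapLength a t) := by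
  unfold overlapLength; fun_prop

lemma integral_overlapLength_sq_of_le {a t : ℝ} (ht : 0 ≤ t) (hta : t ≤ a) :
    ∫ s in Ioi 0, overlapLength a t s ^ 2 = a * t ^ 2 - t ^ 3 / 3 := by
  have hint : ∀ b c : ℝ, IntervalIntegrable (fun s => overlapLength a t s ^ 2) volume b c :=
    fun b c => (by fun_prop : Continuous fun s => overlapLength a t s ^ 2).intervalIntegrable b c
  have h₁ : ∫ s in (0:ℝ)..t, overlapLength a t s ^ 2 = t ^ 3 / 3 := by
    rw [intervalIntegral.integral_congr (g := fun s => s ^ 2) fun s hs => by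
      rw [uIcc_of_le ht] at hs
      simp only [overlapLength_of_le_of_le hs.1 hs.2 (hs.2.trans hta)]]
    norm_num [integral_pow]
  have h₂ : ∫ s in t..a, overlapLength a t s ^ 2 = (a - t) * t ^ 2 := by
    rw [intervalIntegral.integral_congr (g := fun _ => t ^ 2) fun s hs => by
      rw [uIcc_of_le hta] at hs
      simp only [overlapLength_of_le_of_ge ht hs.1 hs.2]]
    simp
  have h₃ : ∫ s in a..a + t, overlapLength a t s ^ 2 = t ^ 3 / 3 := by
    rw [intervalIntegral.integral_congr (g := fun s => (a + t - s) ^ 2) fun s hs => by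
      rw [uIcc_of_le (by linarith)] at hs
      simp only [overlapLength_of_ge_of_ge hs.1 (hta.trans hs.1) hs.2]]
    rw [intervalIntegral.integral_comp_sub_left (fun x => x ^ 2)]
    norm_num [integral_pow]
  calc ∫ s in Ioi 0, overlapLength a t s ^ 2
      = ∫ s in Ioc 0 (a + t), overlapLength a t s ^ 2 := by
        refine setIntegral_eq_of_subset_of_forall_sdiff_eq_zero measurableSet_Ioi
          Ioc_subset_Ioi_self fun s hs => ?_
        obtain ⟨-, hs⟩ : 0 < s ∧ a + t < s := by simpa using hs
        simp [overlapLength_of_add_le hs.le]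
    _ = ∫ s in (0:ℝ)..a + t, overlapLength a t s ^ 2 :=
        (intervalIntegral.integral_of_le (by linarith)).symm
    _ = a * t ^ 2 - t ^ 3 / 3 := by
        rw [← intervalIntegral.integral_add_adjacent_intervals (hint 0 a) (hint a (a + t)),
          ← intervalIntegral.integral_add_adjacent_intervals (hint 0 t) (hint t a), h₁, h₂, h₃]
        ring

lemma integral_overlapLength_sq_of_ge {a t : ℝ} (ha : 0 ≤ a) (hat : a ≤ t) :
    ∫ s in Ioi 0, overlapLength a t s ^ 2 = a ^ 2 * t - a ^ 3 / 3 := by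
  simp only [overlapLength_comm a t]
  rw [integral_overlapLength_sq_of_le ha hat]
  ring

lemma hasDerivAt_neg_mul_exp_neg_mul {Q : ℝ → ℝ} {q m x : ℝ} (hQ : HasDerivAt Q q x) :
    HasDerivAt (fun t => -(Q t * exp (-(m * t)))) ((m * Q x - q) * exp (-(m * x))) x := by
  have hexp : HasDerivAt (fun t => exp (-(m * t))) (-m * exp (-(m * x))) x :=
    (((hasDerivAt_id x).const_mul m).neg.exp).congr_deriv (by simp [mul_comm])
  exact (hQ.mul hexp).neg.congr_deriv (by ring)

section AffineMulExp

variable {α β c m : ℝ}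

lemma hasDerivAt_affine_mul_exp (hm : 0 < m) (x : ℝ) :
    HasDerivAt (fun t => -((α * t + β + α / m) * exp (-(m * t))))
      ((α * x + β) * (m * exp (-(m * x)))) x :=
  (hasDerivAt_neg_mul_exp_neg_mul
    (((hasDerivAt_id x).const_mul α).add_const β |>.add_const (α / m))).congr_deriv
    (by simp only [id_eq, mul_one]; field_simp; ring)

lemma tendsto_affine_mul_exp (hm : 0 < m) :
    Tendsto (fun t => -((α * t + β + α / m) * exp (-(m * t)))) atTop (𝓝 0) := by
  have h₁ := tendsto_rpow_mul_exp_neg_mul_atTop_nhds_zero 1 m hm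
  have h₀ := tendsto_rpow_mul_exp_neg_mul_atTop_nhds_zero 0 m hm
  convert ((h₁.const_mul α).add (h₀.const_mul (β + α / m))).neg using 2 with t
  · simp only [rpow_one, rpow_zero, neg_mul]
    ring
  · simp only [mul_zero, add_zero, neg_zero]

lemma affine_mul_exp_nonneg (hm : 0 < m) (hα : 0 ≤ α) (hβ : 0 ≤ α * c + β) {x : ℝ}
    (hx : x ∈ Ioi c) : 0 ≤ (α * x + β) * (m * exp (-(m * x))) := by
  have : 0 ≤ α * x + β := by nlinarith [mem_Ioi.mp hx]
  positivity

lemma integrableOn_Ioi_affine_mul_exp (hm : 0 < m) (hα : 0 ≤ α) (hβ : 0 ≤ α * c + β) :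
    IntegrableOn (fun t => (α * t + β) * (m * exp (-(m * t)))) (Ioi c) :=
  integrableOn_Ioi_deriv_of_nonneg (hasDerivAt_affine_mul_exp hm c).continuousAt.continuousWithinAt
    (fun x _ => hasDerivAt_affine_mul_exp hm x) (fun _ hx => affine_mul_exp_nonneg hm hα hβ hx)
    (tendsto_affine_mul_exp hm)

lemma integral_Ioi_affine_mul_exp (hm : 0 < m) (hα : 0 ≤ α) (hβ : 0 ≤ α * c + β) :
    ∫ t in Ioi c, (α * t + β) * (m * exp (-(m * t))) = (α * c + β + α / m) * exp (-(m * c)) := by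
  rw [integral_Ioi_of_hasDerivAt_of_nonneg
    (hasDerivAt_affine_mul_exp hm c).continuousAt.continuousWithinAt
    (fun x _ => hasDerivAt_affine_mul_exp hm x) (fun _ hx => affine_mul_exp_nonneg hm hα hβ hx)
    (tendsto_affine_mul_exp hm)]
  ring

end AffineMulExp

lemma intervalIntegral_mul_sq_sub_cube_mul_exp {a m : ℝ} (hm : 0 < m) :
    ∫ t in (0)..a, (a * t ^ 2 - t ^ 3 / 3) * (m * exp (-(m * t)))
      = 2 * (a - 1 / m) / m ^ 2 - (2 * a ^ 3 / 3 + a ^ 2 / m - 2 / m ^ 3) * exp (-(m * a)) := by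
  have hQ (x : ℝ) : HasDerivAt
      (fun t => -((-t ^ 3 / 3 + (a - 1 / m) * (t ^ 2 + 2 * t / m + 2 / m ^ 2)) * exp (-(m * t))))
      ((a * x ^ 2 - x ^ 3 / 3) * (m * exp (-(m * x)))) x := by
    have hcubic := ((hasDerivAt_pow 3 x).neg.div_const 3).add
      ((((hasDerivAt_pow 2 x).add ((hasDerivAt_id x).const_mul 2 |>.div_const m)).add_const
        (2 / m ^ 2)).const_mul (a - 1 / m))
    exact (hasDerivAt_neg_mul_exp_neg_mul hcubic).congr_deriv (by
      simp only [Pi.neg_apply, Pi.add_apply, id_eq, Nat.cast_ofNat, Nat.add_one_sub_one, pow_one]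
      field_simp
      ring)
  rw [intervalIntegral.integral_eq_sub_of_hasDerivAt (fun x _ => hQ x)
    (by apply Continuous.intervalIntegrable; fun_prop)]
  simp only [mul_zero, neg_zero, exp_zero, mul_one]
  field_simp
  ring

lemma integral_integral_overlapLength_sq_mul_exp {a m : ℝ} (ha : 0 < a) (hm : 0 < m) :
    ∫ t in Ioi 0, (∫ s in Ioi 0, overlapLength a t s ^ 2) * (m * exp (-(m * t)))
      = 2 * a / m ^ 2 - 2 * (1 - exp (-(m * a))) / m ^ 3 := by
  have hhead : EqOn (fun t => (∫ s in Ioi 0, overlapLength a t s ^ 2) * (m * exp (-(m * t))))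
      (fun t => (a * t ^ 2 - t ^ 3 / 3) * (m * exp (-(m * t)))) (Ioc 0 a) := fun t ht => by
    simp only [integral_overlapLength_sq_of_le ht.1.le ht.2]
  have htail : EqOn (fun t => (∫ s in Ioi 0, overlapLength a t s ^ 2) * (m * exp (-(m * t))))
      (fun t => (a ^ 2 * t + -(a ^ 3 / 3)) * (m * exp (-(m * t)))) (Ioi a) := fun t ht => by
    simp only [integral_overlapLength_sq_of_ge ha.le (le_of_lt ht), sub_eq_add_neg]
  have hβ : 0 ≤ a ^ 2 * a + -(a ^ 3 / 3) := by nlinarith [pow_pos ha 3]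
  have hint_head : IntegrableOn (fun t => (a * t ^ 2 - t ^ 3 / 3) * (m * exp (-(m * t))))
      (Ioc 0 a) := (by fun_prop : Continuous _).integrableOn_Ioc
  have hsplit := setIntegral_union Ioc_disjoint_Ioi_same measurableSet_Ioi
    (hint_head.congr_fun hhead.symm measurableSet_Ioc)
    ((integrableOn_Ioi_affine_mul_exp hm (sq_nonneg a) hβ).congr_fun htail.symm measurableSet_Ioi)
  rw [Ioc_union_Ioi_eq_Ioi ha.le] at hsplit
  rw [hsplit,
    setIntegral_congr_fun measurableSet_Ioc hhead, setIntegral_congr_fun measurableSet_Ioi htail,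
    ← intervalIntegral.integral_of_le ha.le, intervalIntegral_mul_sq_sub_cube_mul_exp hm,
    integral_Ioi_affine_mul_exp hm (sq_nonneg a) hβ]
  field_simp
  ring

/-- Second term of the protein variance when the mRNA lifetime is exponential (parameter `μ₂`)
and the protein lifetime is deterministic equal to `1/μ₃`. -/
theorem second_term_deterministic_protein (mu2 mu3 : ℝ) (hmu2 : 0 < mu2) (hmu3 : 0 < mu3) :
    ∫ t in Set.Ioi (0 : ℝ),
        (∫ s in Set.Ioi (0 : ℝ),
          (mu3 * max 0 (min s (1 / mu3) - max (s - t) 0)) ^ 2)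
          * (mu2 * Real.exp (-(mu2 * t)))
      = 2 * mu3 / mu2 ^ 2 * (1 - mu3 / mu2 * (1 - Real.exp (-(mu2 / mu3)))) := by
  have hscale (t : ℝ) : ∫ s in Ioi 0, (mu3 * max 0 (min s (1 / mu3) - max (s - t) 0)) ^ 2
      = mu3 ^ 2 * ∫ s in Ioi 0, overlapLength (1 / mu3) t s ^ 2 := by
    simp only [overlapLength, mul_pow, integral_const_mul]
  simp only [hscale, mul_assoc, integral_const_mul]
  rw [integral_integral_overlapLength_sq_mul_exp (one_div_pos.mpr hmu3) hmu2, mul_one_div]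
  field_simp
end
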